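/- arXiv:2202.06925 — 2 statements merged into one kernel-verified Lean document; each statement's English description precedes it below -/
import Mathlib

section
/- In the 3-Partition game determined by integers n ≥ 1, T ≥ 1, m ≥ 1 and item values a(1),…,a(m), for every Nash stable partition π, every part P of π that contains at least one vertex of {v_1,…,v_m, b_1,…,b_n} contains exactly one of the vertices b_1,…,b_n and satisfies Σ_{i : v_i ∈ P} a(i) = T. -/
/-- A partition of the finite vertex set `V`, represented by the function sending each
vertex to its part. -/
structure ASHGPart (V : Type*) [DecidableEq V] where
  part : V → Finset V
  mem_part : ∀ v, v ∈ part v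
  eq_of_mem : ∀ u v, u ∈ part v → part u = part v

/-- The utility of vertex `v` in coalition `S`: the sum of `w v u` over `u ∈ S`, `u ≠ v`. -/
def util {V : Type*} [DecidableEq V] (w : V → V → ℤ) (v : V) (S : Finset V) : ℤ :=
  ∑ u ∈ S.erase v, w v u

/-- A partition is Nash stable if every vertex has nonnegative utility in its own part and
does not prefer any other part of the partition. -/
def NashStable {V : Type*} [DecidableEq V] (w : V → V → ℤ) (π : ASHGPart V) : Prop :=
  ∀ v : V, 0 ≤ util w v (π.part v) ∧ ∀ x : V, util w v (π.part x) ≤ util w v (π.part v)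


/-- The vertex set of the 3-Partition game: `m` item vertices, `n` bin vertices,
the stalker `s` and the helper `s'`. -/
inductive TPV (m n : ℕ) where
  | item : Fin m → TPV m n
  | bin : Fin n → TPV m n
  | s : TPV m n
  | s' : TPV m n
  deriving DecidableEq, Fintype

/-- The weights of the 3-Partition game. -/
def tpw (m n : ℕ) (T : ℤ) (a : Fin m → ℤ) : TPV m n → TPV m n → ℤ
  | .item _, .s => -1
  | .bin _, .s => -1
  | .s, .bin _ => 2 * T
  | .s, .item i => -(a i)
  | .s, .s' => T
  | .s', .s => 1
  | _, _ => 0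

/-! ### Auxiliary lemmas -/

def tpvEquiv (m n : ℕ) : TPV m n ≃ (Fin m ⊕ Fin n ⊕ Bool) where
  toFun x := match x with
    | .item i => .inl i
    | .bin j => .inr (.inl j)
    | .s => .inr (.inr true)
    | .s' => .inr (.inr false)
  invFun x := match x with
    | .inl i => .item i
    | .inr (.inl j) => .bin j
    | .inr (.inr true) => .s
    | .inr (.inr false) => .s'
  left_inv x := by cases x <;> rfl
  right_inv x := by
    rcases x with i | j | b
    · rfl
    · rfl
    · cases b <;> rfl

lemma TPV.sum_univ {m n : ℕ} (f : TPV m n → ℤ) :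
    ∑ u, f u = (∑ i, f (.item i)) + (∑ j, f (.bin j)) + f .s + f .s' := by
  rw [← Equiv.sum_comp (tpvEquiv m n).symm f]
  rw [Fintype.sum_sum_type, Fintype.sum_sum_type, Fintype.sum_bool]
  simp only [tpvEquiv, Equiv.coe_fn_symm_mk]
  ring

lemma util_item {m n : ℕ} {T : ℤ} {a : Fin m → ℤ} (i : Fin m) (S : Finset (TPV m n)) :
    util (tpw m n T a) (.item i) S = if TPV.s ∈ S then -1 else 0 := by
  unfold util
  have h : ∀ u, tpw m n T a (.item i) u = if u = .s then -1 else 0 := by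
    intro u; cases u <;> simp [tpw]
  simp_rw [h]
  rw [Finset.sum_ite_eq' (S.erase (.item i)) (TPV.s) (fun _ => (-1 : ℤ))]
  simp

lemma util_bin {m n : ℕ} {T : ℤ} {a : Fin m → ℤ} (j : Fin n) (S : Finset (TPV m n)) :
    util (tpw m n T a) (.bin j) S = if TPV.s ∈ S then -1 else 0 := by
  unfold util
  have h : ∀ u, tpw m n T a (.bin j) u = if u = .s then -1 else 0 := by
    intro u; cases u <;> simp [tpw]
  simp_rw [h]
  rw [Finset.sum_ite_eq' (S.erase (.bin j)) (TPV.s) (fun _ => (-1 : ℤ))]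
  simp

lemma util_s' {m n : ℕ} {T : ℤ} {a : Fin m → ℤ} (S : Finset (TPV m n)) :
    util (tpw m n T a) .s' S = if TPV.s ∈ S then 1 else 0 := by
  unfold util
  have h : ∀ u, tpw m n T a (.s') u = if u = .s then 1 else 0 := by
    intro u; cases u <;> simp [tpw]
  simp_rw [h]
  rw [Finset.sum_ite_eq' (S.erase (.s')) (TPV.s) (fun _ => (1 : ℤ))]
  simp

lemma util_s {m n : ℕ} {T : ℤ} {a : Fin m → ℤ} (S : Finset (TPV m n)) :
    util (tpw m n T a) .s S =
      2 * T * ((Finset.univ.filter (fun j : Fin n => TPV.bin j ∈ S)).card : ℤ)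
        - (∑ i ∈ Finset.univ.filter (fun i : Fin m => TPV.item i ∈ S), a i)
        + (if TPV.s' ∈ S then T else 0) := by
  unfold util
  have h1 : ∑ u ∈ S.erase .s, tpw m n T a .s u
      = ∑ u : TPV m n, if u ∈ S.erase .s then tpw m n T a .s u else 0 := by
    rw [Finset.sum_ite_mem, Finset.univ_inter]
  rw [h1, TPV.sum_univ]
  have h2 : (∑ i : Fin m, if TPV.item i ∈ S.erase .s then tpw m n T a .s (.item i) else 0)
      = ∑ i ∈ Finset.univ.filter (fun i : Fin m => TPV.item i ∈ S), -(a i) := by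
    rw [Finset.sum_filter]
    congr 1; ext i
    simp [tpw, Finset.mem_erase]
  have h3 : (∑ j : Fin n, if TPV.bin j ∈ S.erase .s then tpw m n T a .s (.bin j) else 0)
      = ∑ j ∈ Finset.univ.filter (fun j : Fin n => TPV.bin j ∈ S), (2 * T) := by
    rw [Finset.sum_filter]
    congr 1; ext j
    simp [tpw, Finset.mem_erase]
  rw [h2, h3, Finset.sum_neg_distrib, Finset.sum_const, nsmul_eq_mul]
  have h4 : (if TPV.s ∈ S.erase .s then tpw m n T a .s .s else 0) = 0 := by simp
  have h5 : (if TPV.s' ∈ S.erase .s then tpw m n T a .s .s' else 0)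
      = (if TPV.s' ∈ S then T else 0) := by
    simp [tpw, Finset.mem_erase]
  rw [h4, h5]
  ring

theorem stmt_7 (n m : ℕ) (T : ℤ) (hn : 1 ≤ n) (hm : 1 ≤ m) (hT : 1 ≤ T)
    (a : Fin m → ℤ) (ha : ∀ i, 1 ≤ a i) (hsum : ∑ i, a i = (n : ℤ) * T)
    (π : ASHGPart (TPV m n)) (hπ : NashStable (tpw m n T a) π)
    (P : Finset (TPV m n)) (hP : ∃ x, P = π.part x)
    (hPne : ∃ y ∈ P, (∃ i : Fin m, y = TPV.item i) ∨ (∃ j : Fin n, y = TPV.bin j)) :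
    (∃! j : Fin n, TPV.bin j ∈ P) ∧
    ∑ i ∈ Finset.univ.filter (fun i => TPV.item i ∈ P), a i = T := by
  classical
  obtain ⟨x0, hPx⟩ := hP
  -- no item or bin shares a part with s
  have hitem_s : ∀ i : Fin m, TPV.s ∉ π.part (.item i) := by
    intro i hs
    have h0 := (hπ (.item i)).1
    rw [util_item] at h0
    simp [hs] at h0
  have hbin_s : ∀ j : Fin n, TPV.s ∉ π.part (.bin j) := by
    intro j hs
    have h0 := (hπ (.bin j)).1
    rw [util_bin] at h0
    simp [hs] at h0
  -- s' lives with s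
  have hs'_eq : π.part .s' = π.part .s := by
    have h1 := (hπ .s').2 .s
    rw [util_s' (T := T) (a := a), util_s' (T := T) (a := a)] at h1
    have hs1 : TPV.s ∈ π.part .s := π.mem_part .s
    simp only [hs1, if_true] at h1
    by_cases hc : TPV.s ∈ π.part .s'
    · exact (π.eq_of_mem .s .s' hc).symm
    · simp [hc] at h1
  have hs'_mem : TPV.s' ∈ π.part .s := hs'_eq ▸ π.mem_part .s'
  -- s's own part has no bins and no items, so its utility is T
  have hBs : (Finset.univ.filter (fun j : Fin n => TPV.bin j ∈ π.part .s)) = ∅ := by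
    rw [Finset.filter_eq_empty_iff]
    intro j _ hj
    apply hbin_s j
    rw [π.eq_of_mem (.bin j) .s hj]
    exact π.mem_part .s
  have hAs : (Finset.univ.filter (fun i : Fin m => TPV.item i ∈ π.part .s)) = ∅ := by
    rw [Finset.filter_eq_empty_iff]
    intro i _ hi
    apply hitem_s i
    rw [π.eq_of_mem (.item i) .s hi]
    exact π.mem_part .s
  have hUs : util (tpw m n T a) .s (π.part .s) = T := by
    rw [util_s, hBs, hAs]
    simp [hs'_mem]
  -- the set of parts containing bins
  set PP : Finset (Finset (TPV m n)) :=
    Finset.univ.image (fun j : Fin n => π.part (.bin j)) with hPP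
  have hbin_mem_iff : ∀ Q ∈ PP, ∀ j : Fin n, TPV.bin j ∈ Q ↔ π.part (.bin j) = Q := by
    intro Q hQ j
    obtain ⟨j0, _, rfl⟩ := Finset.mem_image.mp hQ
    constructor
    · intro hj; exact π.eq_of_mem (.bin j) (.bin j0) hj
    · intro h; rw [← h]; exact π.mem_part _
  have hitem_mem_iff : ∀ Q ∈ PP, ∀ i : Fin m, TPV.item i ∈ Q ↔ π.part (.item i) = Q := by
    intro Q hQ i
    obtain ⟨j0, _, rfl⟩ := Finset.mem_image.mp hQ
    constructor
    · intro hj; exact π.eq_of_mem (.item i) (.bin j0) hj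
    · intro h; rw [← h]; exact π.mem_part _
  -- total bin count over parts
  have hBsum : ∑ Q ∈ PP, ((Finset.univ.filter (fun j : Fin n => TPV.bin j ∈ Q)).card : ℤ)
      = (n : ℤ) := by
    have e0 := Finset.card_eq_sum_card_image (fun j : Fin n => π.part (.bin j))
      (Finset.univ : Finset (Fin n))
    have e1 : ∑ Q ∈ PP, ((Finset.univ.filter (fun j : Fin n => TPV.bin j ∈ Q)).card : ℤ)
        = ∑ Q ∈ PP, ((Finset.univ.filter
            (fun j : Fin n => π.part (.bin j) = Q)).card : ℤ) := by
      apply Finset.sum_congr rfl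
      intro Q hQ
      congr 2
      apply Finset.filter_congr
      intro j _
      exact hbin_mem_iff Q hQ j
    rw [e1]
    rw [← Nat.cast_sum]
    rw [← e0]
    simp
  -- total item weight over parts with bins
  have hAsum : ∑ Q ∈ PP, (∑ i ∈ Finset.univ.filter (fun i : Fin m => TPV.item i ∈ Q), a i)
      = ∑ i ∈ Finset.univ.filter (fun i : Fin m => π.part (.item i) ∈ PP), a i := by
    rw [← Finset.sum_fiberwise_eq_sum_filter Finset.univ PP (fun i => π.part (.item i)) a]
    apply Finset.sum_congr rfl
    intro Q hQ
    apply Finset.sum_congr _ (fun _ _ => rfl)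
    apply Finset.filter_congr
    intro i _
    exact hitem_mem_iff Q hQ i
  have hsplit : (∑ i ∈ Finset.univ.filter (fun i : Fin m => π.part (.item i) ∈ PP), a i)
      + (∑ i ∈ Finset.univ.filter (fun i : Fin m => ¬ π.part (.item i) ∈ PP), a i)
      = (n : ℤ) * T := by
    rw [Finset.sum_filter_add_sum_filter_not, hsum]
  have hextra_nonneg :
      0 ≤ ∑ i ∈ Finset.univ.filter (fun i : Fin m => ¬ π.part (.item i) ∈ PP), a i :=
    Finset.sum_nonneg fun i _ => le_trans zero_le_one (ha i)
  have hcard : (PP.card : ℤ) ≤ (n : ℤ) := by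
    have h := Finset.card_image_le (f := fun j : Fin n => π.part (.bin j))
      (s := (Finset.univ : Finset (Fin n)))
    have : PP.card ≤ n := by simpa using h
    exact_mod_cast this
  -- slack nonnegativity from Nash stability of s
  have hkey : ∀ Q ∈ PP, 0 ≤ (∑ i ∈ Finset.univ.filter (fun i : Fin m => TPV.item i ∈ Q), a i)
      - 2 * T * ((Finset.univ.filter (fun j : Fin n => TPV.bin j ∈ Q)).card : ℤ) + T := by
    intro Q hQ
    obtain ⟨j, _, rfl⟩ := Finset.mem_image.mp hQ
    have h4 := (hπ .s).2 (.bin j)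
    rw [util_s, hUs] at h4
    have h5 : TPV.s' ∉ π.part (.bin j) := by
      intro hj
      apply hbin_s j
      rw [← π.eq_of_mem .s' (.bin j) hj, hs'_eq]
      exact π.mem_part .s
    rw [if_neg h5, add_zero] at h4
    linarith
  have hB1 : ∀ Q ∈ PP,
      (1 : ℤ) ≤ ((Finset.univ.filter (fun j : Fin n => TPV.bin j ∈ Q)).card : ℤ) := by
    intro Q hQ
    obtain ⟨j, _, rfl⟩ := Finset.mem_image.mp hQ
    have hjmem : j ∈ Finset.univ.filter (fun j' : Fin n => TPV.bin j' ∈ π.part (.bin j)) := by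
      simp [π.mem_part (.bin j)]
    have hpos := Finset.card_pos.mpr ⟨j, hjmem⟩
    exact_mod_cast hpos
  -- sum of slacks
  have hσsum : ∑ Q ∈ PP, ((∑ i ∈ Finset.univ.filter (fun i : Fin m => TPV.item i ∈ Q), a i)
      - 2 * T * ((Finset.univ.filter (fun j : Fin n => TPV.bin j ∈ Q)).card : ℤ) + T)
      = (∑ i ∈ Finset.univ.filter (fun i : Fin m => π.part (.item i) ∈ PP), a i)
        - 2 * T * (n : ℤ) + T * (PP.card : ℤ) := by
    rw [Finset.sum_add_distrib, Finset.sum_sub_distrib, hAsum, ← Finset.mul_sum, hBsum,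
      Finset.sum_const, nsmul_eq_mul]
    ring
  have hσ_nonneg : 0 ≤ ∑ Q ∈ PP, ((∑ i ∈ Finset.univ.filter
      (fun i : Fin m => TPV.item i ∈ Q), a i)
      - 2 * T * ((Finset.univ.filter (fun j : Fin n => TPV.bin j ∈ Q)).card : ℤ) + T) :=
    Finset.sum_nonneg hkey
  have hTcard : T * (PP.card : ℤ) ≤ T * (n : ℤ) :=
    mul_le_mul_of_nonneg_left hcard (by linarith)
  -- force equalities
  have hE0 : (∑ i ∈ Finset.univ.filter (fun i : Fin m => ¬ π.part (.item i) ∈ PP), a i) = 0 := by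
    rw [hσsum] at hσ_nonneg
    linarith
  have hcard_eq : (PP.card : ℤ) = (n : ℤ) := by
    rw [hσsum] at hσ_nonneg
    nlinarith
  have hσ_zero : ∑ Q ∈ PP, ((∑ i ∈ Finset.univ.filter
      (fun i : Fin m => TPV.item i ∈ Q), a i)
      - 2 * T * ((Finset.univ.filter (fun j : Fin n => TPV.bin j ∈ Q)).card : ℤ) + T) = 0 := by
    rw [hσsum, hcard_eq]
    linarith
  have hσ0 := (Finset.sum_eq_zero_iff_of_nonneg hkey).mp hσ_zero
  -- every part with a bin has exactly one bin
  have hBsub : ∑ Q ∈ PP, (((Finset.univ.filter (fun j : Fin n => TPV.bin j ∈ Q)).card : ℤ) - 1)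
      = 0 := by
    rw [Finset.sum_sub_distrib, hBsum, Finset.sum_const, nsmul_eq_mul, mul_one]
    linarith
  have hB0 := (Finset.sum_eq_zero_iff_of_nonneg (fun Q hQ => by linarith [hB1 Q hQ])).mp hBsub
  -- P is a part with a bin
  have hPmem : P ∈ PP := by
    obtain ⟨y, hy, hcase⟩ := hPne
    rcases hcase with ⟨i, rfl⟩ | ⟨j, rfl⟩
    · have h6 : π.part (.item i) = P := by
        rw [hPx] at hy ⊢
        exact π.eq_of_mem _ _ hy
      by_contra hnot
      have hi : i ∈ Finset.univ.filter (fun i : Fin m => ¬ π.part (.item i) ∈ PP) := by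
        simp [h6, hnot]
      have hle := Finset.single_le_sum (f := a)
        (fun i _ => le_trans zero_le_one (ha i)) hi
      linarith [ha i]
    · have h6 : π.part (.bin j) = P := by
        rw [hPx] at hy ⊢
        exact π.eq_of_mem _ _ hy
      exact h6 ▸ Finset.mem_image_of_mem _ (Finset.mem_univ j)
  constructor
  · -- exactly one bin in P
    have hB := hB0 P hPmem
    have hcard1 : (Finset.univ.filter (fun j : Fin n => TPV.bin j ∈ P)).card = 1 := by
      have : ((Finset.univ.filter (fun j : Fin n => TPV.bin j ∈ P)).card : ℤ) = 1 := by
        linarith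
      exact_mod_cast this
    obtain ⟨j0, hj0⟩ := Finset.card_eq_one.mp hcard1
    refine ⟨j0, ?_, ?_⟩
    · have hmem : j0 ∈ Finset.univ.filter (fun j : Fin n => TPV.bin j ∈ P) := by
        rw [hj0]; exact Finset.mem_singleton_self j0
      simpa using hmem
    · intro j hj
      have hmem : j ∈ Finset.univ.filter (fun j : Fin n => TPV.bin j ∈ P) := by
        simp [hj]
      rw [hj0] at hmem
      simpa using hmem
  · -- the item values in P sum to T
    have hσP := hσ0 P hPmem
    have hBP := hB0 P hPmem
    have hcard1 : ((Finset.univ.filter (fun j : Fin n => TPV.bin j ∈ P)).card : ℤ) = 1 := by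
      linarith
    rw [hcard1] at hσP
    linarith
end

section
/- Let φ be a 3-CNF formula with variables x_1,…,x_n and clauses C_1,…,C_m, where each clause consists of three literals on three pairwise distinct variables. The SAT game associated with φ admits a connected Nash stable partition if and only if φ is satisfiable, i.e., there exists α : {1,…,n} → {true,false} satisfying every clause of φ. -/
/-- Nash stability for a general hedonic game given by utility functions `u v S`
(the utility of `v` in a coalition `S` containing `v`). -/
def HGNashStable {V : Type*} [DecidableEq V] (u : V → Finset V → ℤ) (π : ASHGPart V) : Prop :=
  ∀ v : V, u v {v} ≤ u v (π.part v) ∧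
    ∀ x : V, π.part x ≠ π.part v → u v (insert v (π.part x)) ≤ u v (π.part v)

/-- The vertex set of the SAT game: the center `s`, literal vertices `lit i true = xᵢ`
and `lit i false = x̄ᵢ`, and clause vertices. -/
inductive SATV (n m : ℕ) where
  | center : SATV n m
  | lit : Fin n → Bool → SATV n m
  | clause : Fin m → SATV n m
  deriving DecidableEq, Fintype

/-- The star with center `s` and all other vertices as leaves. -/
def starG (n m : ℕ) : SimpleGraph (SATV n m) where
  Adj u v := u ≠ v ∧ (u = SATV.center ∨ v = SATV.center)
  symm := ⟨fun u v h => ⟨h.1.symm, h.2.symm⟩⟩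
  loopless := ⟨fun v h => h.1 rfl⟩

/-- Clause `j` (with variables `vars j` and polarities `sgn j`, where `sgn j p = true`
means the `p`-th literal is positive) is witnessed by the coalition `S`: there is a truth
assignment `α` to its three variables satisfying the clause such that, for each of the
three variables, the literal vertex matching its value is in `S` and the opposite literal
vertex is not. -/
def Witness {n m : ℕ} (vars : Fin m → Fin 3 → Fin n) (sgn : Fin m → Fin 3 → Bool)
    (S : Finset (SATV n m)) (j : Fin m) : Prop :=
  ∃ α : Fin 3 → Bool, (∃ p : Fin 3, α p = sgn j p) ∧
    ∀ p : Fin 3, SATV.lit (vars j p) (α p) ∈ S ∧ SATV.lit (vars j p) (!(α p)) ∉ S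

instance {n m : ℕ} (vars : Fin m → Fin 3 → Fin n) (sgn : Fin m → Fin 3 → Bool)
    (S : Finset (SATV n m)) (j : Fin m) : Decidable (Witness vars sgn S j) := by
  unfold Witness; infer_instance

/-- The utilities of the SAT game. -/
def satUtil {n m : ℕ} (vars : Fin m → Fin 3 → Fin n) (sgn : Fin m → Fin 3 → Bool) :
    SATV n m → Finset (SATV n m) → ℤ
  | .clause _, S => if SATV.center ∈ S then 1 else 0
  | .lit _ _, _ => 0
  | .center, S =>
      ((Finset.univ.filter fun j : Fin m => Witness vars sgn S j).card : ℤ)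
      - ((Finset.univ.filter fun i : Fin n =>
            SATV.lit i true ∈ S ∧ SATV.lit i false ∈ S).card : ℤ)
      - ((Finset.univ.filter fun j : Fin m => SATV.clause j ∈ S).card : ℤ)

namespace SimpleGraph

variable {V : Type*} {G : SimpleGraph V}

lemma induce_connected_of_forall_adj {s : Set V} {u : V} (hu : u ∈ s)
    (hadj : ∀ v ∈ s, v ≠ u → G.Adj v u) : (G.induce s).Connected := by
  rw [connected_iff_exists_forall_reachable]
  refine ⟨⟨u, hu⟩, fun ⟨v, hv⟩ => ?_⟩
  by_cases hvu : v = u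
  · subst hvu; rfl
  · exact (show (G.induce s).Adj ⟨v, hv⟩ ⟨u, hu⟩ from hadj v hv hvu).reachable.symm

end SimpleGraph

namespace ASHGPart

variable {V : Type*} [DecidableEq V]

lemma part_ne_of_notMem (π : ASHGPart V) {u v : V} (h : u ∉ π.part v) :
    π.part u ≠ π.part v :=
  fun huv => h (huv ▸ π.mem_part u)

def ofFinset (S : Finset V) : ASHGPart V where
  part v := if v ∈ S then S else {v}
  mem_part v := by split_ifs with h <;> simp [h]
  eq_of_mem u v h := by
    by_cases hv : v ∈ S
    · simp only [hv, if_true] at h ⊢; simp [h]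
    · simp only [hv, if_false, Finset.mem_singleton] at h ⊢; simp [h, hv]

lemma part_ofFinset_of_mem {S : Finset V} {v : V} (h : v ∈ S) : (ofFinset S).part v = S :=
  if_pos h

lemma part_ofFinset_of_notMem {S : Finset V} {v : V} (h : v ∉ S) :
    (ofFinset S).part v = {v} :=
  if_neg h

end ASHGPart

section SATGame

variable {n m : ℕ}

lemma starG_induce_connected_of_center_mem {S : Finset (SATV n m)} (h : SATV.center ∈ S) :
    ((starG n m).induce (↑S : Set (SATV n m))).Connected :=
  SimpleGraph.induce_connected_of_forall_adj h fun _ _ hv => ⟨hv, Or.inr rfl⟩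

lemma starG_induce_connected_singleton (v : SATV n m) :
    ((starG n m).induce (↑({v} : Finset (SATV n m)) : Set (SATV n m))).Connected :=
  SimpleGraph.induce_connected_of_forall_adj (Finset.mem_singleton_self v)
    fun _ hw hwv => absurd (Finset.mem_singleton.mp hw) hwv

lemma starG_induce_connected_part_ofFinset {S : Finset (SATV n m)} (hS : SATV.center ∈ S)
    (v : SATV n m) :
    ((starG n m).induce (↑((ASHGPart.ofFinset S).part v) : Set (SATV n m))).Connected := by
  by_cases hv : v ∈ S
  · rw [ASHGPart.part_ofFinset_of_mem hv]
    exact starG_induce_connected_of_center_mem hS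
  · rw [ASHGPart.part_ofFinset_of_notMem hv]
    exact starG_induce_connected_singleton v

lemma Witness.exists_eq_sgn {vars : Fin m → Fin 3 → Fin n} {sgn : Fin m → Fin 3 → Bool}
    {S : Finset (SATV n m)} {j : Fin m} (h : Witness vars sgn S j) :
    ∃ p, decide (SATV.lit (vars j p) true ∈ S) = sgn j p := by
  obtain ⟨β, ⟨p, hp⟩, hβ⟩ := h
  refine ⟨p, hp ▸ ?_⟩
  cases hb : β p
  · simpa [hb] using (hβ p).2
  · simpa [hb] using (hβ p).1

variable (vars : Fin m → Fin 3 → Fin n) (sgn : Fin m → Fin 3 → Bool)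

lemma satUtil_clause_le_one (j : Fin m) (S : Finset (SATV n m)) :
    satUtil vars sgn (.clause j) S ≤ 1 := by
  simp only [satUtil]; split_ifs <;> norm_num

lemma satUtil_center_singleton : satUtil vars sgn .center {.center} = 0 := by
  simp [satUtil, Witness]

lemma satUtil_center_nonpos {S : Finset (SATV n m)} (h : ∀ j, ¬ Witness vars sgn S j) :
    satUtil vars sgn .center S ≤ 0 := by
  simp only [satUtil, Finset.filter_false_of_mem fun j _ => h j, Finset.card_empty,
    Nat.cast_zero]
  omega

lemma forall_witness_of_satUtil_center_nonneg {S : Finset (SATV n m)}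
    (hcl : ∀ j, SATV.clause j ∈ S) (h : 0 ≤ satUtil vars sgn .center S) :
    ∀ j, Witness vars sgn S j := by
  have hle := Finset.card_filter_le (Finset.univ : Finset (Fin m))
    (fun j => Witness vars sgn S j)
  simp only [satUtil, Finset.filter_true_of_mem fun j _ => hcl j, Finset.card_univ,
    Fintype.card_fin] at h hle
  have hcard : (Finset.univ.filter fun j => Witness vars sgn S j).card =
      (Finset.univ : Finset (Fin m)).card := by
    simp only [Finset.card_univ, Fintype.card_fin]; omega
  exact fun j => Finset.card_filter_eq_iff.mp hcard j (Finset.mem_univ j)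

lemma not_witness_of_lits_on_one_var {j : Fin m} (hinj : Function.Injective (vars j))
    {S : Finset (SATV n m)} {i : Fin n} (hS : ∀ i' b, SATV.lit i' b ∈ S → i' = i) :
    ¬ Witness vars sgn S j := by
  rintro ⟨β, -, hβ⟩
  exact absurd (hinj ((hS _ _ (hβ 0).1).trans (hS _ _ (hβ 1).1).symm))
    (by decide : (0 : Fin 3) ≠ 1)

lemma clause_mem_part_center_of_nashStable {π : ASHGPart (SATV n m)}
    (hπ : HGNashStable (satUtil vars sgn) π) (j : Fin m) : SATV.clause j ∈ π.part .center := by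
  by_contra hj
  have hcenter : SATV.center ∉ π.part (.clause j) := fun h =>
    hj (π.eq_of_mem _ _ h ▸ π.mem_part _)
  have hdev := (hπ (.clause j)).2 .center (π.part_ne_of_notMem hcenter)
  simp [satUtil, π.mem_part, hcenter] at hdev

lemma witness_part_center_of_nashStable {π : ASHGPart (SATV n m)}
    (hπ : HGNashStable (satUtil vars sgn) π) (j : Fin m) :
    Witness vars sgn (π.part .center) j := by
  refine forall_witness_of_satUtil_center_nonneg vars sgn
    (clause_mem_part_center_of_nashStable vars sgn hπ) ?_ j
  simpa [satUtil_center_singleton] using (hπ .center).1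

def truthCoalition (α : Fin n → Bool) : Finset (SATV n m) :=
  Finset.univ.filter fun v => ∀ i b, v = .lit i b → b = α i

@[simp] lemma center_mem_truthCoalition (α : Fin n → Bool) :
    (SATV.center : SATV n m) ∈ truthCoalition α := by
  simp [truthCoalition]

@[simp] lemma clause_mem_truthCoalition (α : Fin n → Bool) (j : Fin m) :
    SATV.clause j ∈ truthCoalition (m := m) α := by
  simp [truthCoalition]

@[simp] lemma lit_mem_truthCoalition (α : Fin n → Bool) (i : Fin n) (b : Bool) :
    SATV.lit i b ∈ truthCoalition (m := m) α ↔ b = α i := by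
  simp only [truthCoalition, Finset.mem_filter, Finset.mem_univ, true_and, SATV.lit.injEq]
  exact ⟨fun h => h i b ⟨rfl, rfl⟩, by rintro rfl _ _ ⟨rfl, rfl⟩; rfl⟩

lemma satUtil_center_truthCoalition {α : Fin n → Bool}
    (hα : ∀ j, ∃ p, α (vars j p) = sgn j p) :
    satUtil vars sgn .center (truthCoalition α) = 0 := by
  have hwit : ∀ j, Witness vars sgn (truthCoalition α) j := fun j =>
    ⟨fun p => α (vars j p), hα j, fun p => by simp⟩
  simp [satUtil, hwit]

lemma exists_eq_lit_of_notMem_truthCoalition {α : Fin n → Bool} {v : SATV n m}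
    (hv : v ∉ truthCoalition α) : ∃ i b, v = .lit i b := by
  cases v <;> simp_all

lemma nashStable_ofFinset_truthCoalition (hinj : ∀ j, Function.Injective (vars j))
    {α : Fin n → Bool} (hα : ∀ j, ∃ p, α (vars j p) = sgn j p) :
    HGNashStable (satUtil vars sgn) (ASHGPart.ofFinset (truthCoalition α)) := by
  intro v
  cases v with
  | center =>
    rw [ASHGPart.part_ofFinset_of_mem (center_mem_truthCoalition α),
      satUtil_center_truthCoalition vars sgn hα]
    refine ⟨(satUtil_center_singleton vars sgn).le, fun x hx => ?_⟩
    have hxT : x ∉ truthCoalition α := fun h => hx (ASHGPart.part_ofFinset_of_mem h)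
    obtain ⟨i, b, rfl⟩ := exists_eq_lit_of_notMem_truthCoalition hxT
    rw [ASHGPart.part_ofFinset_of_notMem hxT]
    refine satUtil_center_nonpos vars sgn fun j =>
      not_witness_of_lits_on_one_var vars sgn (hinj j) (i := i) fun i' b' h => ?_
    simp only [Finset.mem_insert, Finset.mem_singleton, SATV.lit.injEq, reduceCtorEq,
      false_or] at h
    exact h.1
  | lit i b => exact ⟨le_rfl, fun _ _ => le_rfl⟩
  | clause j =>
    rw [ASHGPart.part_ofFinset_of_mem (clause_mem_truthCoalition α j)]
    have hone : satUtil vars sgn (.clause j) (truthCoalition α) = 1 := by simp [satUtil]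
    exact ⟨hone ▸ satUtil_clause_le_one .., fun _ _ => hone ▸ satUtil_clause_le_one ..⟩

end SATGame

theorem stmt_10 (n m : ℕ) (vars : Fin m → Fin 3 → Fin n) (sgn : Fin m → Fin 3 → Bool)
    (hinj : ∀ j : Fin m, Function.Injective (vars j)) :
    (∃ π : ASHGPart (SATV n m), HGNashStable (satUtil vars sgn) π ∧
      ∀ x : SATV n m, ((starG n m).induce (↑(π.part x) : Set (SATV n m))).Connected) ↔
    (∃ α : Fin n → Bool, ∀ j : Fin m, ∃ p : Fin 3, α (vars j p) = sgn j p) := by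
  constructor
  · rintro ⟨π, hπ, -⟩
    exact ⟨fun i => decide (SATV.lit i true ∈ π.part .center),
      fun j => (witness_part_center_of_nashStable vars sgn hπ j).exists_eq_sgn⟩
  · rintro ⟨α, hα⟩
    exact ⟨_, nashStable_ofFinset_truthCoalition vars sgn hinj hα,
      starG_induce_connected_part_ofFinset (center_mem_truthCoalition α)⟩
end
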